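/- Let c > 0, let (r_n) satisfy 0 ≤ r_n < 1 and n·r_n = c + O(n^{-1}), and let α be a complex number with Re(α) > 0. With p_n(·) and F_{k+1,n}(·) as in the context, define for m_0 − 1 ≤ k ≤ n − 1 the quantity G_{k,n} := (1−α)·(p_n(α)/p_k(c^{-1}))·∑_{l=k+1}^n [r_l c^{-1}/(1 − r_l c^{-1})]·p_l(c^{-1})/p_l(α). Then: (a) if cα ≠ 1, G_{k,n} = ((1−α)/(cα−1))·(F_{k+1,n}(c^{-1}) − F_{k+1,n}(α)) exactly; (b) if cα = 1, then G_{k,n} = (1 − c^{-1})·F_{k+1,n}(c^{-1})·ln(n/k) + O(n^{-1}), with the O(n^{-1}) uniform over m_0 − 1 ≤ k ≤ n − 1. -/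

import Mathlib

/-!
Write `P_l = p_l(c⁻¹)/p_l(α)`. Since `P_l = P_{l-1} (1 - r_l/c)/(1 - α r_l)`, the `l`-th summand of
`G_{k,n}` multiplied by `α - c⁻¹` is `c⁻¹ (P_l - P_{l-1})`, so the sum telescopes and gives (a).

If `cα = 1`, every `P_l` is `1` and `G_{k,n} = (1 - c⁻¹) F_{k+1,n}(c⁻¹) ∑_{l=k+1}^n x_l/(1 - x_l)`
with `x_l = r_l/c = 1/l + O(l⁻²)`. Both `x_l` and `x_l/(1 - x_l)` differ from `log l - log (l-1)`
by `O(l⁻²)`, uniformly in `l ≥ m₀` (the finitely many small `l` only change the constant), so the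
sum is `log (n/k) + O(1/k)` while `F_{k+1,n}(c⁻¹) ≤ exp (-∑ x_l) = O(k/n)`.
-/

open Filter Topology

noncomputable section

/-- `p_n(x) = ∏_{m=m₀}^n (1 - x r_m)` (so that `p_{m₀-1}(x) = 1`, the empty product).
The quotient `p_n(x)/p_k(x)` is the paper's `F_{k+1,n}(x)`. -/
def pprod (r : ℕ → ℝ) (m0 : ℕ) (x : ℂ) (n : ℕ) : ℂ :=
  ∏ m ∈ Finset.Icc m0 n, (1 - x * (r m : ℂ))

/-- The quantity `G_{k,n} = (1-α) (p_n(α)/p_k(c⁻¹)) ∑_{l=k+1}^n (r_l c⁻¹/(1-r_l c⁻¹))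
p_l(c⁻¹)/p_l(α)` (the entry `[A³¹_{k+1,n}]` of Lemma `lem:terms_in_A_k_n`). -/
def Gterm (r : ℕ → ℝ) (m0 : ℕ) (c : ℝ) (α : ℂ) (k n : ℕ) : ℂ :=
  (1 - α) * (pprod r m0 α n / pprod r m0 ((c⁻¹ : ℝ) : ℂ) k) *
    ∑ l ∈ Finset.Icc (k + 1) n,
      ((r l * c⁻¹ : ℝ) : ℂ) / (1 - ((r l * c⁻¹ : ℝ) : ℂ)) *
        (pprod r m0 ((c⁻¹ : ℝ) : ℂ) l / pprod r m0 α l)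

open Finset Asymptotics

lemma sum_Ioc_sub_sub_one {G : Type*} [AddCommGroup G] (f : ℕ → G) {k n : ℕ} (h : k ≤ n) :
    ∑ i ∈ Ioc k n, (f i - f (i - 1)) = f n - f k := by
  rw [← Ico_add_one_add_one_eq_Ioc, ← sum_Ico_add']
  simpa using sum_Ico_sub f h

lemma prod_Icc_eq_mul_prod_Ioc {M : Type*} [CommMonoid M] (f : ℕ → M) {a k n : ℕ}
    (hak : a ≤ k + 1) (hkn : k ≤ n) :
    ∏ i ∈ Icc a n, f i = (∏ i ∈ Icc a k, f i) * ∏ i ∈ Ioc k n, f i := by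
  rw [← Ico_add_one_right_eq_Icc, ← Ico_add_one_right_eq_Icc,
    ← Ico_add_one_add_one_eq_Ioc, prod_Ico_consecutive _ hak (by omega)]

lemma sum_Ioc_log_sub_log {k n : ℕ} (hk : k ≠ 0) (hkn : k ≤ n) :
    ∑ m ∈ Ioc k n, (Real.log m - Real.log (m - 1)) = Real.log (n / k) := by
  have hn : (n : ℝ) ≠ 0 := Nat.cast_ne_zero.mpr (by omega)
  rw [Real.log_div hn (by positivity), ← sum_Ioc_sub_sub_one (fun m : ℕ => Real.log m) hkn]
  refine sum_congr rfl fun m hm => ?_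
  rw [Nat.cast_pred (by grind)]

lemma abs_sum_Ioc_sub_log_le (g : ℕ → ℝ) {E : ℝ} (hE : 0 ≤ E) {k n : ℕ} (hk : k ≠ 0)
    (hkn : k ≤ n) (hg : ∀ m ∈ Ioc k n, |g m - (Real.log m - Real.log (m - 1))| ≤ E / m ^ 2) :
    |∑ m ∈ Ioc k n, g m - Real.log (n / k)| ≤ 2 * E / (k + 1) :=
  calc |∑ m ∈ Ioc k n, g m - Real.log (n / k)|
      = |∑ m ∈ Ioc k n, (g m - (Real.log m - Real.log (m - 1)))| := by
        rw [sum_sub_distrib, sum_Ioc_log_sub_log hk hkn]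
    _ ≤ ∑ m ∈ Ioc k n, E * ((m : ℝ) ^ 2)⁻¹ :=
        (abs_sum_le_sum_abs _ _).trans
          (sum_le_sum fun m hm => (hg m hm).trans_eq (div_eq_mul_inv _ _))
    _ ≤ E * ∑ m ∈ Ioo k (n + 1), ((m : ℝ) ^ 2)⁻¹ := by
        rw [← mul_sum]
        refine mul_le_mul_of_nonneg_left
          (sum_le_sum_of_subset_of_nonneg (fun m => ?_) fun _ _ _ => by positivity) hE
        simp only [mem_Ioc, mem_Ioo]
        omega
    _ ≤ 2 * E / (k + 1) := by
        rw [mul_comm 2 E, mul_div_assoc]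
        exact mul_le_mul_of_nonneg_left (sum_Ioo_inv_sq_le k (n + 1)) hE

lemma isBigO_log_sub_log_sub_inv :
    (fun m : ℕ => Real.log m - Real.log (m - 1) - (m : ℝ)⁻¹) =O[atTop]
      fun m : ℕ => ((m : ℝ) ^ 2)⁻¹ := by
  refine IsBigO.of_bound 2 ?_
  filter_upwards [eventually_ge_atTop 2] with m hm
  have hm : (2 : ℝ) ≤ m := by exact_mod_cast hm
  have hm1 : (0 : ℝ) < m - 1 := by linarith
  have hlog : Real.log m - Real.log (m - 1) = Real.log (m / (m - 1)) :=
    (Real.log_div (by linarith) hm1.ne').symm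
  have hpos : 0 < (m : ℝ) / (m - 1) := by positivity
  have hlo : (m : ℝ)⁻¹ ≤ Real.log (m / (m - 1)) := by
    have := Real.one_sub_inv_le_log_of_pos hpos
    rwa [inv_div, one_sub_div (by linarith), sub_sub_cancel, one_div] at this
  have hhi : Real.log (m / (m - 1)) ≤ (m - 1 : ℝ)⁻¹ := by
    have := Real.log_le_sub_one_of_pos hpos
    rwa [div_sub_one hm1.ne', sub_sub_cancel, one_div] at this
  have hgap : (m - 1 : ℝ)⁻¹ - (m : ℝ)⁻¹ ≤ 2 * ((m : ℝ) ^ 2)⁻¹ := by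
    rw [inv_sub_inv hm1.ne' (by positivity), ← div_eq_mul_inv,
      div_le_div_iff₀ (by positivity) (by positivity)]
    nlinarith
  rw [hlog, Real.norm_eq_abs, Real.norm_eq_abs, abs_of_nonneg (by positivity),
    abs_of_nonneg (by linarith)]
  linarith

lemma isBigO_sub_log_sub_log {x : ℕ → ℝ}
    (hx : (fun m => x m - (m : ℝ)⁻¹) =O[atTop] fun m : ℕ => ((m : ℝ) ^ 2)⁻¹) :
    (fun m => x m - (Real.log m - Real.log (m - 1))) =O[atTop] fun m : ℕ => ((m : ℝ) ^ 2)⁻¹ :=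
  (hx.sub isBigO_log_sub_log_sub_inv).congr_left fun m => by ring

lemma isBigO_div_one_sub_sub_log_sub_log {x : ℕ → ℝ}
    (hx : (fun m => x m - (m : ℝ)⁻¹) =O[atTop] fun m : ℕ => ((m : ℝ) ^ 2)⁻¹) :
    (fun m => x m / (1 - x m) - (Real.log m - Real.log (m - 1))) =O[atTop]
      fun m : ℕ => ((m : ℝ) ^ 2)⁻¹ := by
  have hinv : Tendsto (fun m : ℕ => (m : ℝ)⁻¹) atTop (𝓝 0) := tendsto_inv_atTop_nhds_zero_nat
  have hsq : (fun m : ℕ => ((m : ℝ) ^ 2)⁻¹) = fun m : ℕ => (m : ℝ)⁻¹ * (m : ℝ)⁻¹ := by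
    ext m : 1; rw [sq, mul_inv]
  have hx' : x =O[atTop] fun m : ℕ => (m : ℝ)⁻¹ := by
    have h : (fun m : ℕ => ((m : ℝ) ^ 2)⁻¹) =O[atTop] fun m : ℕ => (m : ℝ)⁻¹ := by
      rw [hsq]
      simpa using (isBigO_refl (fun m : ℕ => (m : ℝ)⁻¹) atTop).mul (hinv.isBigO_one ℝ)
    exact ((hx.trans h).add (isBigO_refl _ _)).congr_left fun m => by ring
  have hx0 : Tendsto x atTop (𝓝 0) := hx'.trans_tendsto hinv
  have hquot : (fun m => x m * x m * (1 - x m)⁻¹) =O[atTop] fun m : ℕ => ((m : ℝ) ^ 2)⁻¹ := by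
    have h1 : Tendsto (fun m => (1 - x m)⁻¹) atTop (𝓝 1) := by
      simpa using (tendsto_const_nhds.sub hx0 : Tendsto (fun m => 1 - x m) atTop (𝓝 (1 - 0))).inv₀
        (by norm_num)
    rw [hsq]
    simpa using (hx'.mul hx').mul (h1.isBigO_one ℝ)
  refine ((isBigO_sub_log_sub_log hx).add hquot).congr' ?_ EventuallyEq.rfl
  filter_upwards [hx0.eventually (gt_mem_nhds one_pos)] with m hm
  have : 1 - x m ≠ 0 := by linarith
  field_simp
  ring

lemma isBigO_inv_mul_sub_inv {c : ℝ} (hc : c ≠ 0) {r : ℕ → ℝ}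
    (hr : (fun n : ℕ => (n : ℝ) * r n - c) =O[atTop] fun n : ℕ => (n : ℝ)⁻¹) :
    (fun m => c⁻¹ * r m - (m : ℝ)⁻¹) =O[atTop] fun m : ℕ => ((m : ℝ) ^ 2)⁻¹ := by
  refine (((isBigO_refl (fun m : ℕ => (m : ℝ)⁻¹) atTop).mul hr).const_mul_left c⁻¹).congr' ?_
    (Eventually.of_forall fun m => by simp [sq])
  filter_upwards [eventually_ne_atTop 0] with m hm
  field_simp

lemma prod_Ioc_one_sub_le (x : ℕ → ℝ) {A : ℝ} (hA : 0 ≤ A) {k n : ℕ} (hk : k ≠ 0) (hkn : k ≤ n)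
    (hx1 : ∀ m ∈ Ioc k n, x m ≤ 1)
    (hxA : ∀ m ∈ Ioc k n, |x m - (Real.log m - Real.log (m - 1))| ≤ A / m ^ 2) :
    ∏ m ∈ Ioc k n, (1 - x m) ≤ Real.exp (2 * A) * k / n := by
  have hsum := (abs_le.1 (abs_sum_Ioc_sub_log_le x hA hk hkn hxA)).1
  have hA' : 2 * A / (k + 1) ≤ 2 * A := div_le_self (by positivity) (by linarith)
  have hnk : (0 : ℝ) < n / k := div_pos (by norm_cast; omega) (by norm_cast; omega)
  calc ∏ m ∈ Ioc k n, (1 - x m)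
      ≤ ∏ m ∈ Ioc k n, Real.exp (-x m) :=
        prod_le_prod (fun m hm => by linarith [hx1 m hm])
          fun m _ => by linarith [Real.add_one_le_exp (-x m)]
    _ = Real.exp (-∑ m ∈ Ioc k n, x m) := by rw [← Real.exp_sum, sum_neg_distrib]
    _ ≤ Real.exp (2 * A - Real.log (n / k)) := Real.exp_le_exp.2 (by linarith)
    _ = Real.exp (2 * A) * k / n := by
        rw [Real.exp_sub, Real.exp_log hnk, div_div_eq_mul_div]

theorem exists_prod_Ioc_mul_abs_sum_sub_log_le {x : ℕ → ℝ} {m0 : ℕ} (hm0 : 2 ≤ m0)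
    (hx1 : ∀ m, m0 ≤ m → x m ≤ 1)
    (hx : (fun m => x m - (m : ℝ)⁻¹) =O[atTop] fun m : ℕ => ((m : ℝ) ^ 2)⁻¹) :
    ∃ C, ∀ k n : ℕ, m0 - 1 ≤ k → k ≤ n →
      (∏ m ∈ Ioc k n, (1 - x m)) * |∑ m ∈ Ioc k n, x m / (1 - x m) - Real.log (n / k)| ≤ C / n := by
  obtain ⟨A, hA0, hA⟩ := bound_of_isBigO_nat_atTop (isBigO_sub_log_sub_log hx)
  obtain ⟨E, hE0, hE⟩ := bound_of_isBigO_nat_atTop (isBigO_div_one_sub_sub_log_sub_log hx)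
  refine ⟨Real.exp (2 * A) * (2 * E), fun k n hk hkn => ?_⟩
  have hk0 : k ≠ 0 := by omega
  have hsq : ∀ m ∈ Ioc k n, ((m : ℝ) ^ 2)⁻¹ ≠ 0 := fun m hm => by
    have : m ≠ 0 := by grind
    positivity
  calc (∏ m ∈ Ioc k n, (1 - x m)) * |∑ m ∈ Ioc k n, x m / (1 - x m) - Real.log (n / k)|
      ≤ (Real.exp (2 * A) * k / n) * (2 * E / (k + 1)) := by
        refine mul_le_mul (prod_Ioc_one_sub_le x hA0.le hk0 hkn (fun m hm => hx1 m (by grind))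
          fun m hm => ?_) (abs_sum_Ioc_sub_log_le _ hE0.le hk0 hkn fun m hm => ?_)
          (abs_nonneg _) (by positivity)
        · simpa [div_eq_mul_inv] using hA (hsq m hm)
        · simpa [div_eq_mul_inv] using hE (hsq m hm)
    _ = Real.exp (2 * A) * (2 * E) / n * (k / (k + 1)) := by ring
    _ ≤ Real.exp (2 * A) * (2 * E) / n :=
        mul_le_of_le_one_right (by positivity) ((div_le_one (by positivity)).2 (by linarith))

lemma pprod_succ {r : ℕ → ℝ} {m0 : ℕ} (x : ℂ) {n : ℕ} (h : m0 ≤ n + 1) :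
    pprod r m0 x (n + 1) = pprod r m0 x n * (1 - x * r (n + 1)) :=
  prod_Icc_succ_top h _

lemma pprod_ne_zero {r : ℕ → ℝ} {m0 : ℕ} {x : ℂ} (hx : ∀ m, m0 ≤ m → 1 - x * r m ≠ 0) (n : ℕ) :
    pprod r m0 x n ≠ 0 :=
  prod_ne_zero_iff.2 fun m hm => hx m (mem_Icc.1 hm).1

lemma pprod_ofReal (r : ℕ → ℝ) (m0 : ℕ) (t : ℝ) (n : ℕ) :
    pprod r m0 t n = ((∏ m ∈ Icc m0 n, (1 - t * r m) : ℝ) : ℂ) := by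
  simp [pprod]

lemma sub_mul_sum_Ioc_div_pprod {r : ℕ → ℝ} {m0 : ℕ} {x y : ℂ}
    (hx : ∀ m, m0 ≤ m → 1 - x * r m ≠ 0) (hy : ∀ m, m0 ≤ m → 1 - y * r m ≠ 0)
    {k n : ℕ} (hk : m0 ≤ k + 1) (hkn : k ≤ n) :
    (y - x) * ∑ l ∈ Ioc k n, x * r l / (1 - x * r l) * (pprod r m0 x l / pprod r m0 y l) =
      x * (pprod r m0 x n / pprod r m0 y n - pprod r m0 x k / pprod r m0 y k) := by
  rw [← sum_Ioc_sub_sub_one (fun l => pprod r m0 x l / pprod r m0 y l) hkn, mul_sum, mul_sum]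
  refine sum_congr rfl fun l hl => ?_
  obtain ⟨j, rfl⟩ : ∃ j, l = j + 1 := ⟨l - 1, by grind⟩
  have hj : m0 ≤ j + 1 := by grind
  have := hx _ hj
  have := hy _ hj
  have := pprod_ne_zero hx j
  have := pprod_ne_zero hy j
  simp only [Nat.add_sub_cancel, pprod_succ _ hj]
  field_simp
  ring

lemma Gterm_eq_of_mul_ne_one {r : ℕ → ℝ} {m0 : ℕ} {c : ℝ} {α : ℂ} (hc : c ≠ 0)
    (hcα : (c : ℂ) * α ≠ 1) (hα : ∀ m, m0 ≤ m → 1 - α * r m ≠ 0)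
    (hcr : ∀ m, m0 ≤ m → 1 - ((c⁻¹ : ℝ) : ℂ) * r m ≠ 0) {k n : ℕ} (hk : m0 ≤ k + 1)
    (hkn : k ≤ n) :
    Gterm r m0 c α k n =
      ((1 - α) / ((c : ℂ) * α - 1)) *
        (pprod r m0 ((c⁻¹ : ℝ) : ℂ) n / pprod r m0 ((c⁻¹ : ℝ) : ℂ) k
          - pprod r m0 α n / pprod r m0 α k) := by
  have key := sub_mul_sum_Ioc_div_pprod hcr hα hk hkn
  have hc' : (c : ℂ) ≠ 0 := by exact_mod_cast hc
  have hcα' : (c : ℂ) * α - 1 ≠ 0 := sub_ne_zero.2 hcα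
  have := pprod_ne_zero hα k
  have := pprod_ne_zero hα n
  have := pprod_ne_zero hcr k
  have hsum : ∑ l ∈ Ioc k n, ((r l * c⁻¹ : ℝ) : ℂ) / (1 - ((r l * c⁻¹ : ℝ) : ℂ)) *
        (pprod r m0 ((c⁻¹ : ℝ) : ℂ) l / pprod r m0 α l) =
      ((c : ℂ) * α - 1)⁻¹ * (pprod r m0 ((c⁻¹ : ℝ) : ℂ) n / pprod r m0 α n
        - pprod r m0 ((c⁻¹ : ℝ) : ℂ) k / pprod r m0 α k) := by
    rw [eq_inv_mul_iff_mul_eq₀ hcα', ← mul_right_inj' (inv_ne_zero hc'), ← mul_assoc]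
    simpa [mul_comm, mul_sub, sub_mul, hc'] using key
  rw [Gterm, Icc_add_one_left_eq_Ioc, hsum]
  generalize pprod r m0 ((c⁻¹ : ℝ) : ℂ) k = pk at *
  field_simp

lemma Gterm_inv_sub_log_eq_ofReal {r : ℕ → ℝ} {m0 : ℕ} {c : ℝ}
    (hcr : ∀ m, m0 ≤ m → 1 - c⁻¹ * r m ≠ 0)
    {k n : ℕ} (hk : m0 ≤ k + 1) (hkn : k ≤ n) :
    Gterm r m0 c ((c⁻¹ : ℝ) : ℂ) k n
        - (1 - ((c⁻¹ : ℝ) : ℂ)) *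
            (pprod r m0 ((c⁻¹ : ℝ) : ℂ) n / pprod r m0 ((c⁻¹ : ℝ) : ℂ) k) *
            (Real.log ((n : ℝ) / k) : ℂ) =
      (((1 - c⁻¹) * (∏ m ∈ Ioc k n, (1 - c⁻¹ * r m)) *
        (∑ m ∈ Ioc k n, c⁻¹ * r m / (1 - c⁻¹ * r m) - Real.log (n / k)) : ℝ) : ℂ) := by
  have hQ : ∀ j, ∏ m ∈ Icc m0 j, (1 - c⁻¹ * r m) ≠ 0 := fun j =>
    prod_ne_zero_iff.2 fun m hm => hcr m (mem_Icc.1 hm).1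
  have hratio : (∏ m ∈ Icc m0 n, (1 - c⁻¹ * r m)) / ∏ m ∈ Icc m0 k, (1 - c⁻¹ * r m) =
      ∏ m ∈ Ioc k n, (1 - c⁻¹ * r m) := by
    rw [prod_Icc_eq_mul_prod_Ioc _ hk hkn, mul_div_cancel_left₀ _ (hQ k)]
  have hsum : ∑ l ∈ Ioc k n, ((r l * c⁻¹ : ℝ) : ℂ) / (1 - ((r l * c⁻¹ : ℝ) : ℂ)) *
        (pprod r m0 ((c⁻¹ : ℝ) : ℂ) l / pprod r m0 ((c⁻¹ : ℝ) : ℂ) l) =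
      ((∑ m ∈ Ioc k n, c⁻¹ * r m / (1 - c⁻¹ * r m) : ℝ) : ℂ) := by
    push_cast
    refine sum_congr rfl fun l _ => ?_
    rw [div_self (pprod_ne_zero (fun m hm => by exact_mod_cast hcr m hm) l), mul_one, mul_comm]
  rw [← hratio, Gterm, Icc_add_one_left_eq_Ioc, hsum, pprod_ofReal, pprod_ofReal]
  push_cast
  ring

theorem Gterm_formula_general
    (c : ℝ) (hc : 0 < c) (r : ℕ → ℝ)
    (hrO : (fun n : ℕ => (n : ℝ) * r n - c) =O[Filter.atTop] fun n : ℕ => (n : ℝ)⁻¹)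
    (α : ℂ)
    (m0 : ℕ) (hm0 : 2 ≤ m0)
    (hm : ∀ m, m0 ≤ m → α.re * r m < 1 ∧ c⁻¹ * r m < 1) :
    ((c : ℂ) * α ≠ 1 →
      ∀ k n : ℕ, m0 - 1 ≤ k → k + 1 ≤ n →
        Gterm r m0 c α k n =
          ((1 - α) / ((c : ℂ) * α - 1)) *
            (pprod r m0 ((c⁻¹ : ℝ) : ℂ) n / pprod r m0 ((c⁻¹ : ℝ) : ℂ) k
              - pprod r m0 α n / pprod r m0 α k)) ∧
    ((c : ℂ) * α = 1 →
      ∃ C : ℝ, ∀ᶠ n : ℕ in Filter.atTop, ∀ k : ℕ, m0 - 1 ≤ k → k + 1 ≤ n →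
        ‖(Gterm r m0 c α k n
            - (1 - ((c⁻¹ : ℝ) : ℂ)) *
                (pprod r m0 ((c⁻¹ : ℝ) : ℂ) n / pprod r m0 ((c⁻¹ : ℝ) : ℂ) k) *
                (Real.log ((n : ℝ) / k) : ℂ))‖
          ≤ C / n) := by
  have hα : ∀ m, m0 ≤ m → 1 - α * r m ≠ 0 := fun m hm' h => by
    have := congrArg Complex.re h
    simp only [Complex.sub_re, Complex.one_re, Complex.mul_re, Complex.ofReal_re,
      Complex.ofReal_im, mul_zero, sub_zero, Complex.zero_re] at this
    linarith [(hm m hm').1]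
  have hcr : ∀ m, m0 ≤ m → 0 < 1 - c⁻¹ * r m := fun m hm' => by linarith [(hm m hm').2]
  refine ⟨fun hcα k n hk hkn => Gterm_eq_of_mul_ne_one hc.ne' hcα hα
    (fun m hm' => by exact_mod_cast (hcr m hm').ne') (by omega) (by omega), fun hcα => ?_⟩
  obtain rfl : α = ((c⁻¹ : ℝ) : ℂ) := by
    rw [Complex.ofReal_inv]
    exact eq_inv_of_mul_eq_one_right hcα
  obtain ⟨C, hC⟩ := exists_prod_Ioc_mul_abs_sum_sub_log_le hm0 (fun m hm' => (hm m hm').2.le)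
    (isBigO_inv_mul_sub_inv hc.ne' hrO)
  refine ⟨|1 - c⁻¹| * C, Eventually.of_forall fun n k hk hkn => ?_⟩
  have hprod : 0 ≤ ∏ m ∈ Ioc k n, (1 - c⁻¹ * r m) :=
    prod_nonneg fun m hm' => (hcr m (by grind)).le
  rw [Gterm_inv_sub_log_eq_ofReal (fun m hm' => (hcr m hm').ne') (by omega) (by omega),
    Complex.norm_real, Real.norm_eq_abs, abs_mul, abs_mul, abs_of_nonneg hprod, mul_assoc,
    mul_div_assoc]
  exact mul_le_mul_of_nonneg_left (hC k n hk (by omega)) (abs_nonneg _)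

/-- **Lemma `lem:terms_in_A_k_n`**: (a) if `cα ≠ 1` then
`G_{k,n} = ((1-α)/(cα-1)) (F_{k+1,n}(c⁻¹) - F_{k+1,n}(α))` exactly; (b) if `cα = 1` then
`G_{k,n} = (1-c⁻¹) F_{k+1,n}(c⁻¹) ln(n/k) + O(n⁻¹)`, uniformly over `m₀-1 ≤ k ≤ n-1`. -/
theorem Gterm_formula
    (c : ℝ) (hc : 0 < c) (r : ℕ → ℝ) (hr0 : ∀ n, 0 ≤ r n) (hr1 : ∀ n, r n < 1)
    (hrO : (fun n : ℕ => (n : ℝ) * r n - c) =O[Filter.atTop] fun n : ℕ => (n : ℝ)⁻¹)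
    (α : ℂ) (hα : 0 < α.re)
    (m0 : ℕ) (hm0 : 2 ≤ m0)
    (hm : ∀ m, m0 ≤ m → α.re * r m < 1 ∧ c⁻¹ * r m < 1) :
    ((c : ℂ) * α ≠ 1 →
      ∀ k n : ℕ, m0 - 1 ≤ k → k + 1 ≤ n →
        Gterm r m0 c α k n =
          ((1 - α) / ((c : ℂ) * α - 1)) *
            (pprod r m0 ((c⁻¹ : ℝ) : ℂ) n / pprod r m0 ((c⁻¹ : ℝ) : ℂ) k
              - pprod r m0 α n / pprod r m0 α k)) ∧
    ((c : ℂ) * α = 1 →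
      ∃ C : ℝ, ∀ᶠ n : ℕ in Filter.atTop, ∀ k : ℕ, m0 - 1 ≤ k → k + 1 ≤ n →
        ‖(Gterm r m0 c α k n
            - (1 - ((c⁻¹ : ℝ) : ℂ)) *
                (pprod r m0 ((c⁻¹ : ℝ) : ℂ) n / pprod r m0 ((c⁻¹ : ℝ) : ℂ) k) *
                (Real.log ((n : ℝ) / k) : ℂ))‖
          ≤ C / n) :=
  Gterm_formula_general c hc r hrO α m0 hm0 hm

end
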